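/- Let G = (V, E) be a finite simple graph, for each v ∈ V let X_v be a set, and let X ⊆ ∏_{v∈V} X_v be strongly d-compatible with G. Let W ⊆ V be an induced forest of G (isolated vertices allowed), and let L ⊆ W be a set obtained by choosing, from each connected component of G[W] containing at least one edge, all of its leaves except exactly one (single-vertex components contribute no vertex to L). Then x_{L ∪ (V \ W)} d^{|W \ L|}-determines x_{W \ L}; in particular cdim(X) ≤ |V| − |W| + |L|. -/

import Mathlib

/-- `x_A` `d`-determines `x_B`. -/
def Determines {V : Type*} {F : V → Type*} (S : Set (∀ v, F v))
    (A B : Set V) (d : ℕ) : Prop :=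
  ∀ c : ∀ a : A, F a,
    ((fun x : ∀ v, F v => fun b : B => x b) ''
      {x ∈ S | ∀ a : A, x a = c a}).encard ≤ (d : ℕ∞)

/-- `S` is `d`-compatible with the graph `G`. -/
def Compatible {V : Type*} {F : V → Type*} (S : Set (∀ v, F v))
    (G : SimpleGraph V) (d : ℕ) : Prop :=
  ∀ v w, G.Adj v w →
    Determines S ((insert v (G.neighborSet v)) \ {w}) {w} d

/-- `S` is strongly `d`-compatible with the graph `G`. -/
def StronglyCompatible {V : Type*} {F : V → Type*} (S : Set (∀ v, F v))
    (G : SimpleGraph V) (d : ℕ) : Prop :=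
  Compatible S G d ∧ ∀ v, Determines S (G.neighborSet v) {v} d

/-- The combinatorial dimension of `S`. -/
noncomputable def cdim {V : Type*} {F : V → Type*} (S : Set (∀ v, F v)) : ℕ :=
  sInf {n : ℕ | ∃ A : Set V, A.ncard = n ∧ ∃ d : ℕ, Determines S A Set.univ d}

/-!
Root every component of the forest `G[W]` that has an edge at its unique leaf outside `L`, and
reveal the vertices of `W \ L` in decreasing distance from their root. An isolated vertex of
`G[W]` has all its neighbours in `Wᶜ`, so strong compatibility reveals it. Any other `v ∈ W \ L`
has a child `u`: a leaf outside `L` is the root itself, and a vertex with two neighbours has at most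
one parent. Then `u` and its neighbours other than `v` lie in `L ∪ Wᶜ` or farther from the root,
so compatibility at `u` reveals `x_v` up to `d` choices. Each of the `|W \ L|` steps multiplies the
number of possibilities by at most `d`.
-/

theorem Set.encard_le_mul_of_encard_fiber_le {α β : Type*} {f : α → β} {s : Set α} {e d : ℕ∞}
    (himage : (f '' s).encard ≤ e) (hfiber : ∀ y, (s ∩ f ⁻¹' {y}).encard ≤ d) :
    s.encard ≤ e * d := by
  classical
  by_cases hfin : (f '' s).Finite
  · have hcover : s ⊆ ⋃ y ∈ hfin.toFinset, s ∩ f ⁻¹' {y} := fun x hx =>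
      Set.mem_biUnion (by simpa using ⟨x, hx, rfl⟩) ⟨hx, rfl⟩
    calc s.encard ≤ (⋃ y ∈ hfin.toFinset, s ∩ f ⁻¹' {y}).encard := Set.encard_le_encard hcover
      _ ≤ ∑ y ∈ hfin.toFinset, (s ∩ f ⁻¹' {y}).encard := Finset.set_encard_biUnion_le _ _
      _ ≤ ∑ _y ∈ hfin.toFinset, d := Finset.sum_le_sum fun y _ => hfiber y
      _ = (f '' s).encard * d := by
        rw [Finset.sum_const, nsmul_eq_mul, hfin.encard_eq_coe_toFinset_card]
      _ ≤ e * d := mul_le_mul_left himage d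
  · rcases eq_or_ne d 0 with rfl | hd
    · rw [mul_zero, nonpos_iff_eq_zero, Set.encard_eq_zero]
      refine Set.eq_empty_of_forall_notMem fun x hx => ?_
      have hx' : x ∈ s ∩ f ⁻¹' {f x} := ⟨hx, rfl⟩
      rw [Set.encard_eq_zero.1 (nonpos_iff_eq_zero.1 (hfiber (f x)))] at hx'
      exact hx'
    · rw [Set.encard_eq_top_iff.2 hfin, top_le_iff] at himage
      rw [himage, ENat.top_mul hd]
      exact le_top

section Determines

variable {V : Type*} {F : V → Type*} {S : Set (∀ v, F v)}

theorem determines_empty (A : Set V) : Determines S A ∅ 1 := by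
  intro c
  rw [Nat.cast_one, Set.encard_le_one_iff]
  exact fun _ _ _ _ => funext fun b => b.2.elim

theorem Determines.mono_left {A A' B : Set V} {d : ℕ} (h : Determines S A B d) (hA : A ⊆ A') :
    Determines S A' B d := by
  intro c
  refine (Set.encard_le_encard (Set.image_mono ?_)).trans (h fun a => c ⟨a, hA a.2⟩)
  exact fun x hx => ⟨hx.1, fun a => hx.2 ⟨a, hA a.2⟩⟩

theorem Determines.union_left {A B : Set V} {d : ℕ} (h : Determines S A B d) :
    Determines S A (A ∪ B) d := by
  intro c
  let resB : (∀ b : ↥(A ∪ B), F b) → ∀ b : B, F b := fun z b => z ⟨b, Or.inr b.2⟩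
  have hinj : Set.InjOn resB
      ((fun x : ∀ v, F v => fun b : ↥(A ∪ B) => x b) '' {x ∈ S | ∀ a : A, x a = c a}) := by
    rintro _ ⟨x₁, hx₁, rfl⟩ _ ⟨x₂, hx₂, rfl⟩ h
    funext ⟨b, hb⟩
    rcases hb with hb | hb
    · exact (hx₁.2 ⟨b, hb⟩).trans (hx₂.2 ⟨b, hb⟩).symm
    · exact congrFun h ⟨b, hb⟩
  rw [← hinj.encard_image, ← Set.image_comp]
  exact h c

theorem Determines.trans_union {A B C : Set V} {e d : ℕ} (hB : Determines S A B e)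
    (hC : Determines S (A ∪ B) C d) : Determines S A (B ∪ C) (e * d) := by
  classical
  intro c
  let resB : (∀ b : ↥(B ∪ C), F b) → ∀ b : B, F b := fun z b => z ⟨b, Or.inl b.2⟩
  let resC : (∀ b : ↥(B ∪ C), F b) → ∀ b : C, F b := fun z b => z ⟨b, Or.inr b.2⟩
  set T := (fun x : ∀ v, F v => fun b : ↥(B ∪ C) => x b) '' {x ∈ S | ∀ a : A, x a = c a}
  push_cast
  refine Set.encard_le_mul_of_encard_fiber_le (f := resB) ?_ fun y => ?_
  · rw [← Set.image_comp]
    exact hB c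
  · let c' : ∀ a : ↥(A ∪ B), F a := fun a =>
      if h : (a : V) ∈ A then c ⟨a, h⟩ else y ⟨a, a.2.resolve_left h⟩
    have hinj : Set.InjOn resC (T ∩ resB ⁻¹' {y}) := by
      rintro z₁ ⟨-, hz₁⟩ z₂ ⟨-, hz₂⟩ h
      funext ⟨b, hb⟩
      rcases hb with hb | hb
      · exact congrFun (hz₁.trans hz₂.symm) ⟨b, hb⟩
      · exact congrFun h ⟨b, hb⟩
    rw [← hinj.encard_image]
    refine (Set.encard_le_encard ?_).trans (hC c')
    rintro _ ⟨_, ⟨⟨x, ⟨hxS, hxc⟩, rfl⟩, hxy⟩, rfl⟩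
    refine ⟨x, ⟨hxS, fun ⟨a, ha⟩ => ?_⟩, rfl⟩
    by_cases haA : a ∈ A
    · simpa [c', haA] using hxc ⟨a, haA⟩
    · simpa [c', haA] using congrFun hxy ⟨a, ha.resolve_left haA⟩

theorem Determines.of_rank {β : Type*} [LinearOrder β] {A B : Set V} {d : ℕ} (hB : B.Finite)
    (rank : V → β) (h : ∀ v ∈ B, Determines S (A ∪ {w ∈ B | rank v < rank w}) {v} d) :
    Determines S A B (d ^ B.ncard) := by
  induction hn : B.ncard generalizing B with
  | zero =>
    rw [(Set.ncard_eq_zero hB).1 hn, pow_zero]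
    exact determines_empty A
  | succ n ih =>
    obtain ⟨v, hvB, hmin⟩ :=
      Set.exists_min_image B rank hB (Set.nonempty_of_ncard_ne_zero (by omega))
    have hrest : Determines S A (B \ {v}) (d ^ n) := by
      refine ih hB.sdiff (fun w hw => (h w hw.1).mono_left ?_) ?_
      · exact Set.union_subset_union_right _ fun u ⟨huB, hu⟩ =>
          ⟨⟨huB, fun huv => (hmin w hw.1).not_gt (huv ▸ hu)⟩, hu⟩
      · rw [Set.ncard_sdiff_singleton_of_mem hvB, hn, Nat.add_sub_cancel]
    have hv : Determines S (A ∪ B \ {v}) {v} d := by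
      refine (h v hvB).mono_left (Set.union_subset_union_right _ fun u ⟨huB, hu⟩ => ?_)
      exact ⟨huB, fun huv => hu.ne (huv ▸ rfl)⟩
    rw [pow_succ, ← Set.sdiff_union_of_subset (Set.singleton_subset_iff.2 hvB)]
    exact hrest.trans_union hv

theorem cdim_le_ncard {A B : Set V} {d : ℕ} (h : Determines S A B d) (hAB : A ∪ B = Set.univ) :
    cdim S ≤ A.ncard :=
  Nat.sInf_le ⟨A, rfl, d, hAB ▸ h.union_left⟩

end Determines

namespace SimpleGraph

variable {α : Type*} {Γ : SimpleGraph α} {r v : α}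

theorem IsAcyclic.eq_of_adj_of_dist_lt (hΓ : Γ.IsAcyclic) (hr : Γ.Reachable r v) {a b : α}
    (ha : Γ.Adj v a) (hb : Γ.Adj v b) (ha' : Γ.dist r a < Γ.dist r v)
    (hb' : Γ.dist r b < Γ.dist r v) : a = b := by
  have geodesic_via : ∀ x, Γ.Adj v x → Γ.dist r x < Γ.dist r v →
      ∃ p : Γ.Walk r v, p.IsPath ∧ p.penultimate = x := by
    intro x hx hx'
    obtain ⟨p, -, hp⟩ := (hr.trans hx.reachable).exists_path_of_dist
    have hlen : (p.concat hx.symm).length = Γ.dist r v := by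
      rcases hΓ.dist_eq_dist_add_one_of_adj_of_reachable r hx hr with h | h <;>
        simp [Walk.length_concat, hp] <;> omega
    exact ⟨_, (p.concat hx.symm).isPath_of_length_eq_dist hlen, p.penultimate_concat hx.symm⟩
  obtain ⟨p, hp, rfl⟩ := geodesic_via a ha ha'
  obtain ⟨q, hq, rfl⟩ := geodesic_via b hb hb'
  rw [Subtype.mk.inj ((hΓ.subsingleton_path r v).elim ⟨p, hp⟩ ⟨q, hq⟩)]

theorem IsAcyclic.exists_adj_dist_lt (hΓ : Γ.IsAcyclic) (hr : Γ.Reachable r v)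
    (hv : (Γ.neighborSet v).Nontrivial) : ∃ u, Γ.Adj v u ∧ Γ.dist r v < Γ.dist r u := by
  by_contra! hle
  obtain ⟨a, ha, b, hb, hab⟩ := hv
  exact hab (hΓ.eq_of_adj_of_dist_lt hr ha hb
    ((hle a ha).lt_of_ne (hΓ.dist_ne_of_adj ha hr).symm)
    ((hle b hb).lt_of_ne (hΓ.dist_ne_of_adj hb hr).symm))

theorem IsAcyclic.dist_lt_of_adj_of_dist_lt (hΓ : Γ.IsAcyclic) (hr : Γ.Reachable r v) {u w : α}
    (hvu : Γ.Adj v u) (hlt : Γ.dist r v < Γ.dist r u) (huw : Γ.Adj u w) (hwv : w ≠ v) :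
    Γ.dist r u < Γ.dist r w := by
  have hru := hr.trans hvu.reachable
  refine lt_of_le_of_ne (not_lt.1 fun hw => hwv ?_) (hΓ.dist_ne_of_adj huw hru)
  exact hΓ.eq_of_adj_of_dist_lt hru huw hvu.symm hw hlt

theorem IsAcyclic.exists_adj_dist_lt_of_nonempty (hΓ : Γ.IsAcyclic) (hr : Γ.Reachable r v)
    (hv : (Γ.neighborSet v).Nonempty) (hleaf : (Γ.neighborSet v).Subsingleton → v = r) :
    ∃ u, Γ.Adj v u ∧ Γ.dist r v < Γ.dist r u := by
  rcases (Γ.neighborSet v).subsingleton_or_nontrivial with hsub | hbranch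
  · obtain ⟨u, hvu⟩ := hv
    refine ⟨u, hvu, ?_⟩
    rw [← hleaf hsub, SimpleGraph.dist_self]
    exact hvu.reachable.pos_dist_of_ne hvu.ne
  · exact hΓ.exists_adj_dist_lt hr hbranch

theorem ncard_neighborSet_induce (G : SimpleGraph α) (s : Set α) (v : s) :
    ((G.induce s).neighborSet v).ncard = (G.neighborSet v ∩ s).ncard := by
  rw [neighborSet_induce, ← Set.ncard_image_of_injective _ Subtype.val_injective,
    Subtype.image_preimage_coe, Set.inter_comm]

end SimpleGraph

section Forest

variable {V : Type*} {F : V → Type*} {S : Set (∀ v, F v)} {d : ℕ} {G : SimpleGraph V}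
  {W L : Set V}

theorem determines_of_forest_child (hcomp : Compatible S G d) (hforest : (G.induce W).IsAcyclic)
    (rank : V → ℕ) {r v u : W} (hrank : ∀ y : W, (G.induce W).Reachable r y →
      (G.neighborSet (y : V) ∩ W).Nonempty → rank y = (G.induce W).dist r y)
    (hrv : (G.induce W).Reachable r v) (hvu : (G.induce W).Adj v u)
    (hlt : (G.induce W).dist r v < (G.induce W).dist r u) :
    Determines S ((L ∪ Wᶜ) ∪ {w ∈ W \ L | rank v < rank w}) {(v : V)} d := by
  have hv_rank := hrank v hrv ⟨u, hvu, u.2⟩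
  have farther : ∀ y z : W, (G.induce W).Adj y z → (G.induce W).Reachable r y →
      (G.induce W).dist r v < (G.induce W).dist r y →
      (y : V) ∈ (L ∪ Wᶜ) ∪ {w ∈ W \ L | rank v < rank w} := by
    intro y z hyz hry hy
    by_cases hyL : (y : V) ∈ L
    · exact Or.inl (Or.inl hyL)
    · refine Or.inr ⟨⟨y.2, hyL⟩, ?_⟩
      rwa [hrank y hry ⟨z, hyz, z.2⟩, hv_rank]
  have hru := hrv.trans hvu.reachable
  refine (hcomp u v hvu.symm).mono_left ?_
  rintro x ⟨hxu | hux, hxv⟩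
  · exact hxu ▸ farther u v hvu.symm hru hlt
  · by_cases hxW : x ∈ W
    · have hux : (G.induce W).Adj u ⟨x, hxW⟩ := hux
      have hxv' : (⟨x, hxW⟩ : W) ≠ v := fun h => hxv (congrArg Subtype.val h)
      exact farther _ u hux.symm (hru.trans hux.reachable)
        (hlt.trans (hforest.dist_lt_of_adj_of_dist_lt hrv hvu hlt hux hxv'))
    · exact Or.inl (Or.inr hxW)

theorem exists_rank_determines (hcomp : StronglyCompatible S G d)
    (hforest : (G.induce W).IsAcyclic)
    (hchoice : ∀ v : W, (G.neighborSet (v : V) ∩ W).Nonempty →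
      ∃! w : W, (G.induce W).Reachable v w ∧
        (G.neighborSet (w : V) ∩ W).ncard = 1 ∧ (w : V) ∉ L) :
    ∃ rank : V → ℕ, ∀ v ∈ W \ L,
      Determines S ((L ∪ Wᶜ) ∪ {w ∈ W \ L | rank v < rank w}) {v} d := by
  classical
  choose root hroot hroot_unique using hchoice
  let rank : V → ℕ := fun x =>
    if h : ∃ hx : x ∈ W, (G.neighborSet x ∩ W).Nonempty then
      (G.induce W).dist (root ⟨x, h.1⟩ h.2) ⟨x, h.1⟩
    else 0
  refine ⟨rank, fun v ⟨hvW, hvL⟩ => ?_⟩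
  by_cases hv : (G.neighborSet v ∩ W).Nonempty
  swap
  · exact (hcomp.2 v).mono_left fun x hx => Or.inl (Or.inr fun hxW => hv ⟨x, hx, hxW⟩)
  set v' : W := ⟨v, hvW⟩
  have hrv := (hroot v' hv).1.symm
  have hrank : ∀ y : W, (G.induce W).Reachable (root v' hv) y →
      (hy : (G.neighborSet (y : V) ∩ W).Nonempty) → rank y = (G.induce W).dist (root v' hv) y := by
    intro y hry hy
    have hsame : root y hy = root v' hv :=
      (hroot_unique y hy _ ⟨hry.symm, (hroot v' hv).2⟩).symm
    simp only [rank, dif_pos (⟨y.2, hy⟩ : ∃ _ : (y : V) ∈ W, _), hsame]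
  have hvx : (G.induce W).Adj v' ⟨hv.some, hv.some_mem.2⟩ := hv.some_mem.1
  obtain ⟨u, hvu, hlt⟩ := hforest.exists_adj_dist_lt_of_nonempty hrv ⟨_, hvx⟩ fun hleaf => by
    refine hroot_unique v' hv v' ⟨.refl _, ?_, hvL⟩
    rw [← SimpleGraph.ncard_neighborSet_induce, hleaf.eq_singleton_of_mem hvx, Set.ncard_singleton]
  exact determines_of_forest_child hcomp.1 hforest rank hrank hrv hvu hlt

end Forest

theorem forest_bound_strong_general {V : Type*} [Fintype V] (G : SimpleGraph V)
    {F : V → Type*} (S : Set (∀ v, F v)) (d : ℕ)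
    (hcomp : StronglyCompatible S G d)
    (W : Set V)
    (hforest : (G.induce W).IsAcyclic)
    (L : Set V)
    (hchoice : ∀ v : W, (G.neighborSet (v : V) ∩ W).Nonempty →
      ∃! w : W, (G.induce W).Reachable v w ∧
        (G.neighborSet (w : V) ∩ W).ncard = 1 ∧ (w : V) ∉ L) :
    Determines S (L ∪ Wᶜ) (W \ L) (d ^ (W \ L).ncard) ∧
      cdim S ≤ Fintype.card V - W.ncard + L.ncard := by
  obtain ⟨rank, hrank⟩ := exists_rank_determines hcomp hforest hchoice
  have hdet : Determines S (L ∪ Wᶜ) (W \ L) (d ^ (W \ L).ncard) :=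
    Determines.of_rank (Set.toFinite _) rank hrank
  have hcover : (L ∪ Wᶜ) ∪ (W \ L) = Set.univ := by
    ext x
    by_cases x ∈ W <;> by_cases x ∈ L <;> simp [*]
  refine ⟨hdet, ?_⟩
  calc cdim S ≤ (L ∪ Wᶜ).ncard := cdim_le_ncard hdet hcover
    _ ≤ L.ncard + Wᶜ.ncard := Set.ncard_union_le _ _
    _ = Fintype.card V - W.ncard + L.ncard := by
      rw [Set.ncard_compl, Nat.card_eq_fintype_card, add_comm]

/-- Forest Bound, strong form: let `S` be strongly `d`-compatible with `G`, let
`W` be an induced forest of `G` (isolated vertices allowed), and let `L ⊆ W`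
consist of leaves of `G[W]` such that from each connected component of `G[W]`
containing at least one edge exactly one leaf is excluded from `L` (single-vertex
components contribute no vertex to `L`).  Then `x_{L ∪ (V \ W)}`
`d^{|W \ L|}`-determines `x_{W \ L}`; in particular
`cdim S ≤ |V| - |W| + |L|`. -/
theorem forest_bound_strong {V : Type*} [Fintype V] (G : SimpleGraph V)
    {F : V → Type*} (S : Set (∀ v, F v)) (d : ℕ)
    (hcomp : StronglyCompatible S G d)
    (W : Set V)
    (hforest : (G.induce W).IsAcyclic)
    (L : Set V) (hLW : L ⊆ W)
    (hleaf : ∀ v ∈ L, (G.neighborSet v ∩ W).ncard = 1)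
    (hchoice : ∀ v : W, (G.neighborSet (v : V) ∩ W).Nonempty →
      ∃! w : W, (G.induce W).Reachable v w ∧
        (G.neighborSet (w : V) ∩ W).ncard = 1 ∧ (w : V) ∉ L) :
    Determines S (L ∪ Wᶜ) (W \ L) (d ^ (W \ L).ncard) ∧
      cdim S ≤ Fintype.card V - W.ncard + L.ncard :=
  forest_bound_strong_general G S d hcomp W hforest L hchoice
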